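/- arXiv:0901.1072 — 3 statements merged into one kernel-verified Lean document; each statement's English description precedes it below -/
import Mathlib

section
/- For a finite set X, a function h : X → ℝ, and a probability measure μ on X, the equality P(h) = μ(h) + S(μ) holds if and only if μ is the Gibbs measure associated with h, i.e., μ(x) = e^{h(x)}/∑_{y} e^{h(y)} for all x ∈ X. -/
open Finset Real

theorem pressure_eq_iff_gibbs
    (X : Type*) [Fintype X] [Nonempty X] (h : X → ℝ)
    (μ : X → ℝ) (hμ0 : ∀ x, 0 ≤ μ x) (hμ1 : ∑ x, μ x = 1) :
    Real.log (∑ x, Real.exp (h x)) =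
        (∑ x, μ x * h x) + (-∑ x, μ x * Real.log (μ x)) ↔
      ∀ x, μ x = Real.exp (h x) / ∑ y, Real.exp (h y) := by
  set Z := ∑ y, Real.exp (h y) with hZ
  have hZpos : 0 < Z := Finset.sum_pos (fun x _ => Real.exp_pos _) Finset.univ_nonempty
  set ν : X → ℝ := fun x => Real.exp (h x) / Z with hν
  have hνpos : ∀ x, 0 < ν x := fun x => div_pos (Real.exp_pos _) hZpos
  have hν1 : ∑ x, ν x = 1 := by
    simp only [hν]
    rw [← Finset.sum_div, div_self hZpos.ne']
  have hlogν : ∀ x, Real.log (ν x) = h x - Real.log Z := fun x => by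
    simp only [hν]
    rw [Real.log_div (Real.exp_pos _).ne' hZpos.ne', Real.log_exp]
  have key : ∀ x, μ x * Real.log (ν x / μ x) ≤ ν x - μ x := by
    intro x
    rcases eq_or_lt_of_le (hμ0 x) with h0 | h0
    · rw [← h0]; simp [(hνpos x).le]
    · have hle := Real.log_le_sub_one_of_pos (div_pos (hνpos x) h0)
      calc μ x * Real.log (ν x / μ x) ≤ μ x * (ν x / μ x - 1) :=
            mul_le_mul_of_nonneg_left hle h0.le
        _ = ν x - μ x := by field_simp
  have sum_eq : ∑ x, μ x * Real.log (ν x / μ x)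
      = (∑ x, μ x * h x) + (-∑ x, μ x * Real.log (μ x)) - Real.log Z := by
    have hterm : ∀ x, μ x * Real.log (ν x / μ x)
        = μ x * h x - μ x * Real.log (μ x) - μ x * Real.log Z := by
      intro x
      rcases eq_or_lt_of_le (hμ0 x) with h0 | h0
      · rw [← h0]; ring
      · rw [Real.log_div (hνpos x).ne' h0.ne', hlogν]; ring
    rw [Finset.sum_congr rfl (fun x _ => hterm x), Finset.sum_sub_distrib,
      Finset.sum_sub_distrib, ← Finset.sum_mul, hμ1]
    ring
  constructor
  · intro hE x
    have hsum0 : ∑ x, (ν x - μ x - μ x * Real.log (ν x / μ x)) = 0 := by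
      rw [Finset.sum_sub_distrib, Finset.sum_sub_distrib, hν1, hμ1, sum_eq, ← hE]; ring
    have hnn : ∀ x ∈ Finset.univ, (0:ℝ) ≤ ν x - μ x - μ x * Real.log (ν x / μ x) := by
      intro x _; linarith [key x]
    have hall := (Finset.sum_eq_zero_iff_of_nonneg hnn).mp hsum0
    have hx0 := hall x (Finset.mem_univ x)
    have hμx : μ x = ν x := by
      rcases eq_or_lt_of_le (hμ0 x) with h0 | h0
      · exfalso
        rw [← h0] at hx0
        simp only [sub_zero, zero_mul] at hx0
        have : ν x = 0 := by linarith
        exact (hνpos x).ne' this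
      · by_contra hne
        have hdiv : ν x / μ x ≠ 1 := by
          intro hc
          apply hne
          field_simp at hc
          linarith
        have hlt := Real.log_lt_sub_one_of_pos (div_pos (hνpos x) h0) hdiv
        have hlt2 : μ x * Real.log (ν x / μ x) < μ x * (ν x / μ x - 1) :=
          mul_lt_mul_of_pos_left hlt h0
        have heq : μ x * (ν x / μ x - 1) = ν x - μ x := by field_simp
        linarith
    rw [hμx]
  · intro hG
    have h1 : ∑ x, μ x * Real.log (ν x / μ x) = 0 := by
      apply Finset.sum_eq_zero
      intro x _
      have : μ x = ν x := hG x
      rw [this, div_self (hνpos x).ne', Real.log_one, mul_zero]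
    rw [h1] at sum_eq
    linarith
end

section
/- For a finite alphabet X of size d and any probability measure μ on X, lim_{δ→0} lim_{N→∞} (1/N) log #Δ(μ;N,δ) = S(μ), where Δ(μ;N,δ) is the set of sequences x ∈ X^N whose type ν_x satisfies |ν_x(t) − μ(t)| < δ for all t ∈ X. -/
open Finset Real Classical Filter

open scoped Topology

/-!
Concatenation maps `Δ(μ;m,δ) × Δ(μ;n,δ)` injectively into `Δ(μ;m+n,δ)`, because the frequency
vector of a concatenation is a convex combination of the two frequency vectors. Hence
`log #Δ(μ;N,δ)` is superadditive as soon as the sets are nonempty, and a version of Fekete's lemma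
gives the inner limit `L δ`.

To bound `L δ`, weight sequences by product measures. Under `μ^N`, Chebyshev's inequality gives
`Δ(μ;N,δ)` mass at least `1 - 1/(Nδ²)`, while each typical sequence has mass at most
`exp (N ∑ (μ t - δ) log μ t)`; so `L δ ≥ -∑ (μ t - δ) log μ t`. Under `q^N` with
`q = (μ + δ)/(1 + dδ)`, each typical sequence has mass at least `exp (N ∑ (μ t + δ) log q t)`, so
`L δ ≤ ∑ negMulLog (μ t + δ) - negMulLog (1 + dδ)`. Both bounds are continuous in `δ` with value
`S(μ)` at `δ = 0`.
-/

theorem tendsto_mul_add_div_mul_add (a b d : ℝ) {c : ℝ} (hc : c ≠ 0) :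
    Tendsto (fun x : ℝ => (x * a + b) / (x * c + d)) atTop (𝓝 (a / c)) := by
  have := (tendsto_const_nhds (x := a) |>.add <|
      tendsto_const_nhds (x := b).div_atTop tendsto_id).div
    (tendsto_const_nhds (x := c) |>.add <| tendsto_const_nhds (x := d).div_atTop tendsto_id)
    (by simpa using hc)
  rw [add_zero, add_zero] at this
  refine this.congr' ((eventually_ne_atTop 0).mono fun x hx => ?_)
  simp only [Pi.div_apply, id]
  field_simp

theorem exists_tendsto_div_of_superadditive_ge {a : ℕ → ℝ} {N₀ : ℕ}
    (hsup : ∀ m ≥ N₀, ∀ n ≥ N₀, a m + a n ≤ a (m + n))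
    (hbdd : BddAbove ((fun n : ℕ => a n / n) '' Set.Ici N₀)) :
    ∃ l, Tendsto (fun n : ℕ => a n / n) atTop (𝓝 l) := by
  set S := (fun n : ℕ => a n / n) '' Set.Ici (N₀ + 1)
  have hS : BddAbove S := hbdd.mono (Set.image_mono (Set.Ici_subset_Ici.2 N₀.le_succ))
  refine ⟨sSup S, tendsto_order.2 ⟨fun l hl => ?_, fun l hl => ?_⟩⟩
  · obtain ⟨_, ⟨n, hn, rfl⟩, hln⟩ :=
      exists_lt_of_lt_csSup (Set.image_nonempty.2 Set.nonempty_Ici) hl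
    rw [Set.mem_Ici] at hn
    have hmul : ∀ k r, N₀ ≤ r → k * a n + a r ≤ a (n * k + r) := by
      intro k
      induction k with
      | zero => simp
      | succ k ih =>
        intro r hr
        calc ((k + 1 : ℕ) : ℝ) * a n + a r = a n + (k * a n + a r) := by push_cast; ring
          _ ≤ a n + a (n * k + r) := by grw [ih r hr]
          _ ≤ a (n + (n * k + r)) := hsup n (by omega) _ (by nlinarith)
          _ = a (n * (k + 1) + r) := by ring_nf
    -- shifting by `n` puts every residue class mod `n` above `N₀`
    suffices ∀ᶠ p in atTop, l < a (p + n) / (p + n : ℕ) by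
      filter_upwards [(tendsto_sub_atTop_nat n).eventually this, eventually_ge_atTop n]
        with p hp hpn
      rwa [Nat.sub_add_cancel hpn] at hp
    refine .atTop_of_arithmetic (by omega : n ≠ 0) fun r _ => ?_
    have hlim := tendsto_mul_add_div_mul_add (a n) (a (r + n)) ((r + n : ℕ) : ℝ)
      (show (n : ℝ) ≠ 0 by norm_cast; omega)
    filter_upwards [(hlim.comp tendsto_natCast_atTop_atTop).eventually (lt_mem_nhds hln)]
      with k hk
    calc l < (k * a n + a (r + n)) / (k * n + (r + n : ℕ)) := hk
      _ ≤ a (n * k + (r + n)) / (n * k + (r + n) : ℕ) := by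
        push_cast
        rw [mul_comm (n : ℝ)]
        gcongr
        exact_mod_cast hmul k (r + n) (by omega)
      _ = a (n * k + r + n) / (n * k + r + n : ℕ) := by rw [add_assoc]
  · filter_upwards [eventually_ge_atTop (N₀ + 1)] with p hp
    exact (le_csSup hS ⟨p, hp, rfl⟩).trans_lt hl

theorem abs_div_sub_lt_iff {x m μ δ : ℝ} (hm : 0 < m) :
    |x / m - μ| < δ ↔ |x - m * μ| < m * δ := by
  rw [show x / m - μ = (x - m * μ) / m by field_simp, abs_div, abs_of_pos hm, div_lt_iff₀' hm]

theorem abs_add_div_add_sub_lt {a b m n μ δ : ℝ} (hm : 0 ≤ m) (hn : 0 ≤ n)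
    (ha : |a / m - μ| < δ) (hb : |b / n - μ| < δ) (ha0 : m = 0 → a = 0) (hb0 : n = 0 → b = 0) :
    |(a + b) / (m + n) - μ| < δ := by
  obtain rfl | hm := hm.eq_or_lt
  · simpa [ha0 rfl] using hb
  obtain rfl | hn := hn.eq_or_lt
  · simpa [hb0 rfl] using ha
  rw [abs_div_sub_lt_iff hm] at ha
  rw [abs_div_sub_lt_iff hn] at hb
  rw [abs_div_sub_lt_iff (by positivity)]
  calc |a + b - (m + n) * μ| = |(a - m * μ) + (b - n * μ)| := by ring_nf
    _ ≤ |a - m * μ| + |b - n * μ| := abs_add_le _ _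
    _ < m * δ + n * δ := add_lt_add ha hb
    _ = (m + n) * δ := by ring

section Types

variable {X : Type*}

noncomputable def letterCount {N : ℕ} (x : Fin N → X) (t : X) : ℕ := #{j | x j = t}

theorem letterCount_append {m n : ℕ} (x : Fin m → X) (y : Fin n → X) (t : X) :
    letterCount (Fin.append x y) t = letterCount x t + letterCount y t := by
  simp only [letterCount, card_filter, Fin.sum_univ_add, Fin.append_left, Fin.append_right]

variable [Fintype X]

noncomputable def typicalSet (μ : X → ℝ) (δ : ℝ) (N : ℕ) : Finset (Fin N → X) :=
  {x | ∀ t, |(letterCount x t : ℝ) / N - μ t| < δ}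

theorem abs_letterCount_sub_le {μ : X → ℝ} {δ : ℝ} {N : ℕ} {x : Fin N → X}
    (hx : x ∈ typicalSet μ δ N) (t : X) : |(letterCount x t : ℝ) - N * μ t| ≤ N * δ := by
  obtain rfl | hN := N.eq_zero_or_pos
  · simp [letterCount]
  · exact ((abs_div_sub_lt_iff (by positivity)).1 ((mem_filter.1 hx).2 t)).le

theorem card_typicalSet_mul_le (μ : X → ℝ) (δ : ℝ) (m n : ℕ) :
    #(typicalSet μ δ m) * #(typicalSet μ δ n) ≤ #(typicalSet μ δ (m + n)) := by
  rw [← card_product]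
  refine card_le_card_of_injOn (Fin.appendEquiv m n) (fun p hp => ?_)
    (Fin.appendEquiv m n).injective.injOn
  obtain ⟨hx, hy⟩ := mem_product.1 hp
  refine mem_filter.2 ⟨mem_univ _, fun t => ?_⟩
  change |(letterCount (Fin.append p.1 p.2) t : ℝ) / (m + n : ℕ) - μ t| < δ
  rw [letterCount_append]
  push_cast
  exact abs_add_div_add_sub_lt (Nat.cast_nonneg _) (Nat.cast_nonneg _)
    ((mem_filter.1 hx).2 t) ((mem_filter.1 hy).2 t)
    (fun h => by obtain rfl := Nat.cast_eq_zero.1 h; simp [letterCount])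
    (fun h => by obtain rfl := Nat.cast_eq_zero.1 h; simp [letterCount])

theorem prod_apply_eq_prod_pow_letterCount {M : Type*} [CommMonoid M] {N : ℕ}
    (x : Fin N → X) (q : X → M) : ∏ j, q (x j) = ∏ t, q t ^ letterCount x t := by
  rw [← prod_fiberwise' univ x q]
  exact prod_congr rfl fun t _ => prod_const _

theorem prod_apply_le_exp {N : ℕ} (x : Fin N → X) {q : X → ℝ} (hq : ∀ t, 0 ≤ q t) :
    ∏ j, q (x j) ≤ exp (∑ t, letterCount x t * log (q t)) := by
  rw [prod_apply_eq_prod_pow_letterCount, exp_sum]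
  refine prod_le_prod (fun t _ => pow_nonneg (hq t) _) fun t _ => ?_
  obtain h | h := (hq t).eq_or_lt
  · rw [← h, log_zero, mul_zero, exp_zero]
    exact pow_le_one₀ le_rfl zero_le_one
  · rw [exp_nat_mul, exp_log h]

theorem prod_apply_eq_exp {N : ℕ} (x : Fin N → X) {q : X → ℝ} (hq : ∀ t, 0 < q t) :
    ∏ j, q (x j) = exp (∑ t, letterCount x t * log (q t)) := by
  simp only [prod_apply_eq_prod_pow_letterCount, exp_sum, exp_nat_mul, exp_log (hq _)]

end Types

section ProductWeights

variable {X : Type*} [Fintype X] {N : ℕ} {q : X → ℝ}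

theorem sum_prod_apply_eq_one (hq : ∑ t, q t = 1) : ∑ x : Fin N → X, ∏ j, q (x j) = 1 := by
  rw [← Fintype.sum_pow, hq, one_pow]

theorem sum_prod_mul_prod_apply (q : X → ℝ) (f : Fin N → X → ℝ) :
    ∑ x : Fin N → X, (∏ j, q (x j)) * ∏ j, f j (x j) = ∏ j, ∑ t, q t * f j t := by
  simp_rw [← prod_mul_distrib]
  exact (Fintype.prod_sum fun j t => q t * f j t).symm

theorem sum_prod_mul_apply (hq : ∑ t, q t = 1) (f : X → ℝ) (j : Fin N) :
    ∑ x : Fin N → X, (∏ i, q (x i)) * f (x j) = ∑ t, q t * f t := by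
  have := sum_prod_mul_prod_apply q fun i t => if i = j then f t else 1
  simpa [apply_ite, hq] using this

theorem sum_prod_mul_apply_mul_apply (hq : ∑ t, q t = 1) (f g : X → ℝ) {j k : Fin N}
    (hjk : j ≠ k) :
    ∑ x : Fin N → X, (∏ i, q (x i)) * (f (x j) * g (x k)) =
      (∑ t, q t * f t) * ∑ t, q t * g t := by
  have hsum : ∀ i, ∑ t, q t * ((if i = j then f t else 1) * (if i = k then g t else 1)) =
      (if i = j then ∑ t, q t * f t else 1) * (if i = k then ∑ t, q t * g t else 1) := by
    intro i
    by_cases hij : i = j <;> by_cases hik : i = k <;> simp_all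
  have := sum_prod_mul_prod_apply q fun i t =>
    (if i = j then f t else 1) * (if i = k then g t else 1)
  simpa only [hsum, prod_mul_distrib, Fintype.prod_ite_eq'] using this

theorem sum_prod_mul_sq_sum_apply {φ : X → ℝ} (hq : ∑ t, q t = 1)
    (hφ : ∑ t, q t * φ t = 0) :
    ∑ x : Fin N → X, (∏ i, q (x i)) * (∑ j, φ (x j)) ^ 2 = N * ∑ t, q t * φ t ^ 2 := by
  calc ∑ x : Fin N → X, (∏ i, q (x i)) * (∑ j, φ (x j)) ^ 2
      = ∑ j, ∑ k, ∑ x : Fin N → X, (∏ i, q (x i)) * (φ (x j) * φ (x k)) := by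
        simp_rw [sq, sum_mul_sum, mul_sum]
        rw [sum_comm]
        exact sum_congr rfl fun _ _ => sum_comm
    _ = ∑ j : Fin N, ∑ t, q t * φ t ^ 2 := by
        refine sum_congr rfl fun j _ => ?_
        rw [sum_eq_single j (fun k _ hkj => by
          rw [sum_prod_mul_apply_mul_apply hq _ _ hkj.symm, hφ, zero_mul]) (by simp)]
        simp only [← sq]
        exact sum_prod_mul_apply hq (fun t => φ t ^ 2) j
    _ = N * ∑ t, q t * φ t ^ 2 := by simp

theorem sum_prod_mul_sq_letterCount_sub {μ : X → ℝ} (hμ : ∑ t, μ t = 1) (t : X) :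
    ∑ x : Fin N → X, (∏ i, μ (x i)) * ((letterCount x t : ℝ) - N * μ t) ^ 2 =
      N * (μ t * (1 - μ t)) := by
  set φ : X → ℝ := fun u => (if u = t then 1 else 0) - μ t
  have hcount : ∀ x : Fin N → X, (letterCount x t : ℝ) - N * μ t = ∑ j, φ (x j) := by
    intro x
    rw [letterCount, card_filter]
    push_cast
    simp only [φ, sum_sub_distrib, sum_const, card_univ, Fintype.card_fin, nsmul_eq_mul]
  have hφ : ∑ u, μ u * φ u = 0 := by
    simp [φ, mul_sub, sum_sub_distrib, ← sum_mul, hμ]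
  have hφ2 : ∑ u, μ u * φ u ^ 2 = μ t * (1 - μ t) := by
    have hsq : ∀ u, φ u ^ 2 = (if u = t then 1 - 2 * μ t else 0) + μ t ^ 2 := by
      intro u
      by_cases hu : u = t <;> simp only [φ, hu, if_true, if_false] <;> ring
    simp only [hsq, mul_add, sum_add_distrib, mul_ite, mul_zero, sum_ite_eq', mem_univ, if_true,
      ← sum_mul, hμ]
    ring
  simp_rw [hcount]
  rw [sum_prod_mul_sq_sum_apply hμ hφ, hφ2]

end ProductWeights

section Counting

variable {X : Type*} [Fintype X] {μ : X → ℝ} {δ : ℝ} {N : ℕ}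

theorem one_sub_le_sum_prod_typicalSet (hμ0 : ∀ t, 0 ≤ μ t) (hμ1 : ∑ t, μ t = 1)
    (hN : 0 < N) (hδ : 0 < δ) :
    1 - 1 / (N * δ ^ 2) ≤ ∑ x ∈ typicalSet μ δ N, ∏ j, μ (x j) := by
  set W : (Fin N → X) → ℝ := fun x => ∏ j, μ (x j)
  set Z : (Fin N → X) → ℝ := fun x => ∑ t, ((letterCount x t : ℝ) - N * μ t) ^ 2
  have hN' : (0 : ℝ) < N := by exact_mod_cast hN
  have hW : ∀ x, 0 ≤ W x := fun x => prod_nonneg fun j _ => hμ0 _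
  have hZ : ∀ x ∈ univ \ typicalSet μ δ N, (N * δ) ^ 2 ≤ Z x := by
    intro x hx
    obtain ⟨t, ht⟩ : ∃ t, ¬|(letterCount x t : ℝ) / N - μ t| < δ := by
      simpa [typicalSet] using hx
    rw [abs_div_sub_lt_iff hN', not_lt] at ht
    calc (N * δ) ^ 2 ≤ ((letterCount x t : ℝ) - N * μ t) ^ 2 := by
          simpa only [sq_abs] using pow_le_pow_left₀ (by positivity) ht 2
      _ ≤ Z x := single_le_sum (f := fun t => ((letterCount x t : ℝ) - N * μ t) ^ 2)
          (fun _ _ => sq_nonneg _) (mem_univ t)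
  have hEZ : ∑ x, W x * Z x ≤ N := by
    calc ∑ x, W x * Z x = ∑ t, N * (μ t * (1 - μ t)) := by
          simp_rw [Z, mul_sum]
          rw [sum_comm]
          exact sum_congr rfl fun t _ => sum_prod_mul_sq_letterCount_sub hμ1 t
      _ ≤ ∑ t, N * μ t := by gcongr with t; nlinarith [sq_nonneg (μ t)]
      _ = N := by rw [← mul_sum, hμ1, mul_one]
  -- Markov's inequality for `Z`
  have hbad : (N * δ) ^ 2 * ∑ x ∈ univ \ typicalSet μ δ N, W x ≤ N :=
    calc (N * δ) ^ 2 * ∑ x ∈ univ \ typicalSet μ δ N, W x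
        ≤ ∑ x ∈ univ \ typicalSet μ δ N, W x * Z x := by
          rw [mul_sum]
          refine sum_le_sum fun x hx => ?_
          rw [mul_comm]
          exact mul_le_mul_of_nonneg_left (hZ x hx) (hW x)
      _ ≤ ∑ x, W x * Z x :=
          sum_le_sum_of_subset_of_nonneg (subset_univ _) fun x _ _ =>
            mul_nonneg (hW x) (sum_nonneg fun _ _ => sq_nonneg _)
      _ ≤ N := hEZ
  have htotal := sum_sdiff (f := W) (subset_univ (typicalSet μ δ N))
  rw [sum_prod_apply_eq_one hμ1] at htotal
  have : ∑ x ∈ univ \ typicalSet μ δ N, W x ≤ 1 / (N * δ ^ 2) := by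
    rw [le_div_iff₀ (by positivity)]
    nlinarith
  linarith

theorem card_typicalSet_le_exp {q : X → ℝ} (hq0 : ∀ t, 0 < q t) (hq1 : ∑ t, q t = 1) :
    (#(typicalSet μ δ N) : ℝ) ≤ exp (-(N * ∑ t, (μ t + δ) * log (q t))) := by
  have hx : ∀ x ∈ typicalSet μ δ N, exp (N * ∑ t, (μ t + δ) * log (q t)) ≤ ∏ j, q (x j) := by
    intro x hx
    rw [prod_apply_eq_exp x hq0, exp_le_exp, mul_sum]
    refine sum_le_sum fun t _ => ?_
    have hq : q t ≤ 1 := hq1 ▸ single_le_sum (fun u _ => (hq0 u).le) (mem_univ t)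
    have hc := abs_le.1 (abs_letterCount_sub_le hx t)
    rw [← mul_assoc]
    exact mul_le_mul_of_nonpos_right (by linarith [hc.2]) (log_nonpos (hq0 t).le hq)
  rw [exp_neg, ← one_div, le_div_iff₀ (exp_pos _)]
  calc (#(typicalSet μ δ N) : ℝ) * exp (N * ∑ t, (μ t + δ) * log (q t))
      ≤ ∑ x ∈ typicalSet μ δ N, ∏ j, q (x j) := by
        rw [← nsmul_eq_mul]; exact card_nsmul_le_sum _ _ _ hx
    _ ≤ ∑ x : Fin N → X, ∏ j, q (x j) :=
        sum_le_sum_of_subset_of_nonneg (subset_univ _) fun x _ _ =>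
          prod_nonneg fun j _ => (hq0 _).le
    _ = 1 := sum_prod_apply_eq_one hq1

theorem mul_exp_le_card_typicalSet (hμ0 : ∀ t, 0 ≤ μ t) (hμ1 : ∑ t, μ t = 1)
    (hN : 0 < N) (hδ : 0 < δ) :
    (1 - 1 / (N * δ ^ 2)) * exp (-(N * ∑ t, (μ t - δ) * log (μ t))) ≤
      #(typicalSet μ δ N) := by
  have hx : ∀ x ∈ typicalSet μ δ N, ∏ j, μ (x j) ≤ exp (N * ∑ t, (μ t - δ) * log (μ t)) := by
    intro x hx
    refine (prod_apply_le_exp x hμ0).trans (exp_le_exp.2 ?_)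
    rw [mul_sum]
    refine sum_le_sum fun t _ => ?_
    have hμ : μ t ≤ 1 := hμ1 ▸ single_le_sum (fun u _ => hμ0 u) (mem_univ t)
    have hc := abs_le.1 (abs_letterCount_sub_le hx t)
    rw [← mul_assoc]
    exact mul_le_mul_of_nonpos_right (by linarith [hc.1]) (log_nonpos (hμ0 t) hμ)
  rw [exp_neg, ← div_eq_mul_inv, div_le_iff₀ (exp_pos _)]
  calc 1 - 1 / (N * δ ^ 2) ≤ ∑ x ∈ typicalSet μ δ N, ∏ j, μ (x j) :=
        one_sub_le_sum_prod_typicalSet hμ0 hμ1 hN hδ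
    _ ≤ #(typicalSet μ δ N) • exp (N * ∑ t, (μ t - δ) * log (μ t)) :=
        sum_le_card_nsmul _ _ _ hx
    _ = _ := nsmul_eq_mul _ _

theorem card_typicalSet_le_exp_negMulLog (hμ0 : ∀ t, 0 ≤ μ t) (hμ1 : ∑ t, μ t = 1)
    (hδ : 0 < δ) :
    (#(typicalSet μ δ N) : ℝ) ≤
      exp (N * (∑ t, negMulLog (μ t + δ) - negMulLog (1 + Fintype.card X * δ))) := by
  set D : ℝ := 1 + Fintype.card X * δ
  have hD : ∑ t, (μ t + δ) = D := by simp [sum_add_distrib, hμ1, D]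
  have hpos : ∀ t, 0 < μ t + δ := fun t => by linarith [hμ0 t]
  have hD0 : 0 < D := by positivity
  convert card_typicalSet_le_exp (q := fun t => (μ t + δ) / D)
    (fun t => div_pos (hpos t) hD0) (by rw [← sum_div, hD, div_self hD0.ne']) using 3
  simp only [log_div (hpos _).ne' hD0.ne', mul_sub, sum_sub_distrib, ← sum_mul, hD, negMulLog,
    neg_mul, sum_neg_distrib]
  ring

theorem eventually_log_card_typicalSet_bounds (hμ0 : ∀ t, 0 ≤ μ t) (hμ1 : ∑ t, μ t = 1)
    (hδ : 0 < δ) :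
    ∀ᶠ N : ℕ in atTop, 0 < #(typicalSet μ δ N) ∧
      N * -∑ t, (μ t - δ) * log (μ t) - log 2 ≤ log #(typicalSet μ δ N) ∧
      log #(typicalSet μ δ N) ≤
        N * (∑ t, negMulLog (μ t + δ) - negMulLog (1 + Fintype.card X * δ)) := by
  have hlarge : ∀ᶠ N : ℕ in atTop, 2 ≤ (N : ℝ) * δ ^ 2 :=
    (tendsto_natCast_atTop_atTop.atTop_mul_const (by positivity)).eventually_ge_atTop 2
  filter_upwards [hlarge, eventually_gt_atTop 0] with N hN hN0
  have hhalf : 1 / 2 * exp (N * -∑ t, (μ t - δ) * log (μ t)) ≤ #(typicalSet μ δ N) := by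
    refine le_trans ?_ (mul_exp_le_card_typicalSet hμ0 hμ1 hN0 hδ)
    rw [← neg_mul_eq_mul_neg]
    gcongr
    rw [le_sub_comm, one_div_le (by positivity) (by norm_num)]
    linarith
  have hpos : (0 : ℝ) < #(typicalSet μ δ N) := lt_of_lt_of_le (by positivity) hhalf
  refine ⟨by exact_mod_cast hpos, ?_, ?_⟩
  · calc N * -∑ t, (μ t - δ) * log (μ t) - log 2
        = log (1 / 2 * exp (N * -∑ t, (μ t - δ) * log (μ t))) := by
          rw [log_mul (by norm_num) (exp_pos _).ne', log_exp, one_div, log_inv]; ring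
      _ ≤ log #(typicalSet μ δ N) := log_le_log (by positivity) hhalf
  · exact (log_le_iff_le_exp hpos).2 (card_typicalSet_le_exp_negMulLog hμ0 hμ1 hδ)

theorem exists_tendsto_log_card_typicalSet_div (hμ0 : ∀ t, 0 ≤ μ t) (hμ1 : ∑ t, μ t = 1)
    (hδ : 0 < δ) :
    ∃ l, Tendsto (fun N : ℕ => log #(typicalSet μ δ N) / N) atTop (𝓝 l) ∧
      -∑ t, (μ t - δ) * log (μ t) ≤ l ∧
      l ≤ ∑ t, negMulLog (μ t + δ) - negMulLog (1 + Fintype.card X * δ) := by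
  set E := -∑ t, (μ t - δ) * log (μ t)
  set F := ∑ t, negMulLog (μ t + δ) - negMulLog (1 + Fintype.card X * δ)
  obtain ⟨N₀, hN₀⟩ := eventually_atTop.1
    ((eventually_log_card_typicalSet_bounds hμ0 hμ1 hδ).and (eventually_gt_atTop 0))
  have hsup : ∀ m ≥ N₀, ∀ n ≥ N₀, log #(typicalSet μ δ m) + log #(typicalSet μ δ n) ≤
      log #(typicalSet μ δ (m + n)) := by
    intro m hm n hn
    rw [← log_mul (by exact_mod_cast (hN₀ m hm).1.1.ne') (by exact_mod_cast (hN₀ n hn).1.1.ne')]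
    exact log_le_log (by exact_mod_cast mul_pos (hN₀ m hm).1.1 (hN₀ n hn).1.1)
      (by exact_mod_cast card_typicalSet_mul_le μ δ m n)
  have hupper : ∀ n ≥ N₀, log #(typicalSet μ δ n) / n ≤ F := fun n hn =>
    (div_le_iff₀ (by exact_mod_cast (hN₀ n hn).2)).2 (by linarith [(hN₀ n hn).1.2.2])
  have hlower : ∀ n ≥ N₀, E - log 2 / n ≤ log #(typicalSet μ δ n) / n := fun n hn => by
    have hn0 : (0 : ℝ) < n := by exact_mod_cast (hN₀ n hn).2
    rw [le_div_iff₀ hn0, sub_mul, div_mul_cancel₀ _ hn0.ne']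
    linarith [(hN₀ n hn).1.2.1]
  obtain ⟨l, hl⟩ := exists_tendsto_div_of_superadditive_ge hsup
    ⟨F, Set.forall_mem_image.2 hupper⟩
  refine ⟨l, hl, ?_, le_of_tendsto hl (eventually_atTop.2 ⟨N₀, hupper⟩)⟩
  have hE : Tendsto (fun n : ℕ => E - log 2 / n) atTop (𝓝 E) := by
    simpa using tendsto_const_nhds.sub (tendsto_const_div_atTop_nhds_zero_nat (log 2))
  exact le_of_tendsto_of_tendsto hE hl (eventually_atTop.2 ⟨N₀, hlower⟩)

end Counting

theorem typical_set_exponential_rate_general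
    (X : Type*) [Fintype X]
    (μ : X → ℝ) (hμ0 : ∀ t, 0 ≤ μ t) (hμ1 : ∑ t, μ t = 1) :
    ∃ L : ℝ → ℝ,
      (∀ δ : ℝ, 0 < δ →
        Tendsto
          (fun N : ℕ => (1 / (N : ℝ)) *
            Real.log
              ((Finset.univ.filter
                  (fun x : Fin N → X => ∀ t : X,
                    |((Finset.univ.filter (fun j : Fin N => x j = t)).card : ℝ) / N
                      - μ t| < δ)).card : ℝ))
          atTop (nhds (L δ))) ∧
      Tendsto L (nhdsWithin 0 (Set.Ioi 0))
        (nhds (-∑ t, μ t * Real.log (μ t))) := by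
  choose! L hL using fun δ (hδ : 0 < δ) => exists_tendsto_log_card_typicalSet_div hμ0 hμ1 hδ
  refine ⟨L, fun δ hδ => ?_, ?_⟩
  · simp only [one_div_mul_eq_div]
    exact (hL δ hδ).1
  have hlower : Tendsto (fun δ => -∑ t, (μ t - δ) * log (μ t)) (𝓝[>] 0)
      (𝓝 (-∑ t, μ t * log (μ t))) :=
    (Continuous.tendsto' (by fun_prop) 0 _ (by simp)).mono_left nhdsWithin_le_nhds
  have hupper : Tendsto
      (fun δ => ∑ t, negMulLog (μ t + δ) - negMulLog (1 + Fintype.card X * δ)) (𝓝[>] 0)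
      (𝓝 (-∑ t, μ t * log (μ t))) :=
    (Continuous.tendsto' (by fun_prop) 0 _ (by simp [negMulLog])).mono_left nhdsWithin_le_nhds
  exact tendsto_of_tendsto_of_tendsto_of_le_of_le' hlower hupper
    (eventually_nhdsWithin_of_forall fun δ hδ => (hL δ hδ).2.1)
    (eventually_nhdsWithin_of_forall fun δ hδ => (hL δ hδ).2.2)

theorem typical_set_exponential_rate
    (X : Type*) [Fintype X] [Nonempty X]
    (μ : X → ℝ) (hμ0 : ∀ t, 0 ≤ μ t) (hμ1 : ∑ t, μ t = 1) :
    ∃ L : ℝ → ℝ,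
      (∀ δ : ℝ, 0 < δ →
        Tendsto
          (fun N : ℕ => (1 / (N : ℝ)) *
            Real.log
              ((Finset.univ.filter
                  (fun x : Fin N → X => ∀ t : X,
                    |((Finset.univ.filter (fun j : Fin N => x j = t)).card : ℝ) / N
                      - μ t| < δ)).card : ℝ))
          atTop (nhds (L δ))) ∧
      Tendsto L (nhdsWithin 0 (Set.Ioi 0))
        (nhds (-∑ t, μ t * Real.log (μ t))) :=
  typical_set_exponential_rate_general X μ hμ0 hμ1
end

section
/- Let μ_0 be a fully supported probability measure on a finite set X and μ_1 ≠ μ_0 another probability measure on X. Then there exists δ > 0 such that limsup_{N→∞} (1/N) log μ_0^{⊗N}(Δ(μ_1;N,δ)) < 0, where Δ(μ_1;N,δ) = {x ∈ X^N : |ν_x(t) − μ_1(t)| ≤ δ for all t ∈ X}. -/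
open Finset Real Classical Filter

/-!
Pick a letter `t₀` with `μ₁ t₀ ≠ μ₀ t₀`, put `c = μ₁ t₀ - μ₀ t₀`, `δ = |c| / 2` and
`f = c • 1_{t₀}`. On `Δ(μ₁;N,δ)` the sum `∑ⱼ f (x j)` is at least `N a` for a level `a` strictly
above the `μ₀`-mean of `f`, so the exponential Markov (Chernoff) bound gives
`μ₀^⊗N (Δ) ≤ r ^ N` with `r = ∑ₜ μ₀ t exp (λ (f t - a))`, and `r < 1` for small `λ > 0`
because `r = 1` at `λ = 0` with derivative `E_{μ₀} f - a < 0` there.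
Rounding `N μ₁` shows that `Δ` is nonempty for large `N`, so `μ₀^⊗N (Δ) ≥ (min μ₀) ^ N`:
this lower bound keeps the real `limsup` from being a junk value.
-/

theorem limsup_inv_mul_log_le_log {u : ℕ → ℝ} {c r : ℝ} (hc : 0 < c)
    (hlow : ∀ᶠ N in atTop, c ^ N ≤ u N) (hup : ∀ᶠ N in atTop, u N ≤ r ^ N) :
    limsup (fun N : ℕ => (1 / (N : ℝ)) * log (u N)) atTop ≤ log r := by
  have hbounds : ∀ᶠ N : ℕ in atTop,
      log c ≤ (1 / (N : ℝ)) * log (u N) ∧ (1 / (N : ℝ)) * log (u N) ≤ log r := by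
    filter_upwards [hlow, hup, eventually_gt_atTop 0] with N hl hu hN
    have hN' : (0 : ℝ) < N := by exact_mod_cast hN
    have hpos : 0 < u N := (pow_pos hc N).trans_le hl
    rw [one_div, le_inv_mul_iff₀ hN', inv_mul_le_iff₀ hN', ← log_pow, ← log_pow]
    exact ⟨log_le_log (pow_pos hc N) hl, log_le_log hpos hu⟩
  exact limsup_le_of_le (isCoboundedUnder_le_of_eventually_le atTop (hbounds.mono fun _ h => h.1))
    (hbounds.mono fun _ h => h.2)

theorem pow_le_sum_prod {X : Type*} {w : X → ℝ} {m : ℝ} (hm : 0 ≤ m) (hw : ∀ t, m ≤ w t) {N : ℕ}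
    {s : Finset (Fin N → X)} (hs : s.Nonempty) : m ^ N ≤ ∑ x ∈ s, ∏ j, w (x j) := by
  obtain ⟨x, hx⟩ := hs
  calc m ^ N = ∏ _j : Fin N, m := by simp
    _ ≤ ∏ j, w (x j) := prod_le_prod (fun _ _ => hm) fun j _ => hw (x j)
    _ ≤ _ := single_le_sum (fun y _ => prod_nonneg fun j _ => hm.trans (hw (y j))) hx

section Types

variable {X : Type*} [Fintype X]

/-- The set `Δ(μ;N,δ)` of the paper. -/
noncomputable def typeBall (μ : X → ℝ) (N : ℕ) (δ : ℝ) : Finset (Fin N → X) :=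
  univ.filter fun x => ∀ t, |((univ.filter fun j => x j = t).card : ℝ) / N - μ t| ≤ δ

theorem le_sum_single_of_mem_typeBall {μ : X → ℝ} {N : ℕ} {δ : ℝ} {x : Fin N → X}
    (hx : x ∈ typeBall μ N δ) (t₀ : X) (c : ℝ) :
    N * (c * μ t₀ - |c| * δ) ≤ ∑ j, (Pi.single t₀ c : X → ℝ) (x j) := by
  have hsum : ∑ j, (Pi.single t₀ c : X → ℝ) (x j) = (univ.filter fun j => x j = t₀).card * c := by
    simp [Pi.single_apply, sum_ite]
  rcases N.eq_zero_or_pos with rfl | hN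
  · simp
  have hN' : (0 : ℝ) < N := by exact_mod_cast hN
  have hdev : -(|c| * δ) ≤ c * ((univ.filter fun j => x j = t₀).card / N - μ t₀) := by
    refine neg_le_of_abs_le ?_
    rw [abs_mul]
    exact mul_le_mul_of_nonneg_left ((mem_filter.1 hx).2 t₀) (abs_nonneg c)
  calc (N : ℝ) * (c * μ t₀ - |c| * δ)
      ≤ N * (c * μ t₀ + c * ((univ.filter fun j => x j = t₀).card / N - μ t₀)) := by
        gcongr; linarith
    _ = _ := by rw [hsum]; field_simp; ring

theorem sum_filter_prod_le_mgf_pow {w : X → ℝ} (hw : ∀ t, 0 ≤ w t) (f : X → ℝ) (a : ℝ)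
    {l : ℝ} (hl : 0 ≤ l) (N : ℕ) :
    ∑ x ∈ univ.filter (fun x : Fin N → X => N * a ≤ ∑ j, f (x j)), ∏ j, w (x j) ≤
      (∑ t, w t * exp (l * (f t - a))) ^ N := by
  have markov : ∀ x ∈ univ.filter (fun x : Fin N → X => N * a ≤ ∑ j, f (x j)),
      ∏ j, w (x j) ≤ ∏ j, (w (x j) * exp (l * (f (x j) - a))) := by
    intro x hx
    have hexp : 1 ≤ ∏ j, exp (l * (f (x j) - a)) := by
      rw [← exp_sum, one_le_exp_iff, ← Finset.mul_sum, Finset.sum_sub_distrib]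
      simp only [sum_const, card_univ, Fintype.card_fin, nsmul_eq_mul]
      exact mul_nonneg hl (sub_nonneg.2 (mem_filter.1 hx).2)
    rw [prod_mul_distrib]
    exact le_mul_of_one_le_right (prod_nonneg fun j _ => hw _) hexp
  calc _ ≤ ∑ x ∈ univ.filter (fun x : Fin N → X => N * a ≤ ∑ j, f (x j)),
        ∏ j, (w (x j) * exp (l * (f (x j) - a))) := sum_le_sum markov
    _ ≤ ∑ x : Fin N → X, ∏ j, (w (x j) * exp (l * (f (x j) - a))) :=
        sum_le_sum_of_subset_of_nonneg (filter_subset _ _) fun x _ _ =>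
          prod_nonneg fun j _ => mul_nonneg (hw _) (exp_pos _).le
    _ = _ := (Fintype.sum_pow (fun t => w t * exp (l * (f t - a))) N).symm

theorem exists_mgf_lt_one {w : X → ℝ} (hw1 : ∑ t, w t = 1) {f : X → ℝ} {a : ℝ}
    (ha : ∑ t, w t * f t < a) : ∃ l > 0, ∑ t, w t * exp (l * (f t - a)) < 1 := by
  set g : ℝ → ℝ := fun l => ∑ t, w t * exp (l * (f t - a))
  have hg0 : g 0 = 1 := by simp [g, hw1]
  have hderiv : HasDerivAt g (∑ t, w t * (f t - a)) 0 := by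
    have := HasDerivAt.fun_sum (u := univ) fun t _ =>
      (((hasDerivAt_id (0:ℝ)).mul_const (f t - a)).exp).const_mul (w t)
    simpa [g] using this
  have hneg : ∑ t, w t * (f t - a) < 0 := by
    simp only [mul_sub, sum_sub_distrib, ← sum_mul, hw1]
    linarith
  obtain ⟨l, hslope, hl⟩ := ((hderiv.hasDerivWithinAt (s := Set.Ioi 0)).limsup_slope_le'
    (lt_irrefl 0) hneg).and self_mem_nhdsWithin |>.exists
  refine ⟨l, hl, ?_⟩
  rw [slope_def_field, sub_zero, div_lt_iff₀ hl, zero_mul] at hslope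
  linarith

theorem exists_card_filter_eq (k : X → ℕ) {N : ℕ} (hk : ∑ t, k t = N) :
    ∃ x : Fin N → X, ∀ t, (univ.filter fun j => x j = t).card = k t := by
  let e : (Σ t, Fin (k t)) ≃ Fin N := Fintype.equivFinOfCardEq (by simp [hk])
  refine ⟨fun j => (e.symm j).1, fun t => ?_⟩
  rw [card_filter, e.symm.sum_comp (fun s => if s.1 = t then 1 else 0), Fintype.sum_sigma]
  simp [apply_ite Finset.card]

theorem exists_sum_eq_abs_sub_le [Nonempty X] {μ : X → ℝ} (hμ0 : ∀ t, 0 ≤ μ t)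
    (hμ1 : ∑ t, μ t = 1) (N : ℕ) :
    ∃ k : X → ℕ, ∑ t, k t = N ∧ ∀ t, |(k t : ℝ) - N * μ t| ≤ Fintype.card X := by
  set fl : X → ℕ := fun t => ⌊N * μ t⌋₊
  have hfl_le : ∀ t, (fl t : ℝ) ≤ N * μ t := fun t => Nat.floor_le (by have := hμ0 t; positivity)
  have hfl_gt : ∀ t, N * μ t - 1 < fl t := fun t => by
    have := Nat.lt_floor_add_one (N * μ t); simp only [fl]; linarith
  have hdefect : (N : ℝ) - ∑ t, (fl t : ℝ) = ∑ t, (N * μ t - fl t) := by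
    rw [sum_sub_distrib, ← mul_sum, hμ1, mul_one]
  have hdefect0 : 0 ≤ ∑ t, (N * μ t - fl t) := sum_nonneg fun t _ => sub_nonneg.2 (hfl_le t)
  have hdefect1 : ∑ t, (N * μ t - fl t) ≤ Fintype.card X := by
    simpa using sum_le_sum fun t (_ : t ∈ univ) => (sub_lt_comm.1 (hfl_gt t)).le
  have hsum_le : ∑ t, fl t ≤ N := by exact_mod_cast (sub_nonneg.1 (hdefect ▸ hdefect0))
  -- the rounding defect `N - ∑ ⌊N μ t⌋ ∈ [0, card X]` goes to one arbitrary point `t'`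
  let t' := Classical.arbitrary X
  refine ⟨fun t => fl t + if t = t' then N - ∑ s, fl s else 0, ?_, fun t => ?_⟩
  · simp [sum_add_distrib, hsum_le]
  · have hone : (1 : ℝ) ≤ Fintype.card X := by exact_mod_cast Fintype.card_pos
    dsimp only
    split_ifs with ht
    · push_cast [hsum_le]
      rw [abs_le]; constructor <;> linarith [hfl_le t, hfl_gt t]
    · rw [abs_le]; constructor <;> push_cast <;> linarith [hfl_le t, hfl_gt t]

theorem typeBall_nonempty [Nonempty X] {μ : X → ℝ} (hμ0 : ∀ t, 0 ≤ μ t) (hμ1 : ∑ t, μ t = 1)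
    {N : ℕ} {δ : ℝ} (hN : 0 < N) (hδN : Fintype.card X ≤ δ * N) :
    (typeBall μ N δ).Nonempty := by
  obtain ⟨k, hk, hkμ⟩ := exists_sum_eq_abs_sub_le hμ0 hμ1 N
  obtain ⟨x, hx⟩ := exists_card_filter_eq k hk
  have hN' : (0 : ℝ) < N := by exact_mod_cast hN
  refine ⟨x, mem_filter.2 ⟨mem_univ x, fun t => ?_⟩⟩
  rw [hx t, ← mul_div_cancel_left₀ (μ t) hN'.ne', ← sub_div, abs_div, abs_of_pos hN',
    div_le_iff₀ hN']
  exact (hkμ t).trans hδN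

end Types

theorem type_deviation_exponentially_small
    (X : Type*) [Fintype X] [Nonempty X]
    (μ₀ μ₁ : X → ℝ)
    (hμ₀ : ∀ t, 0 < μ₀ t) (hμ₀1 : ∑ t, μ₀ t = 1)
    (hμ₁0 : ∀ t, 0 ≤ μ₁ t) (hμ₁1 : ∑ t, μ₁ t = 1)
    (hne : μ₁ ≠ μ₀) :
    ∃ δ : ℝ, 0 < δ ∧
      Filter.limsup
        (fun N : ℕ => (1 / (N : ℝ)) *
          Real.log
            (∑ x ∈ Finset.univ.filter
                (fun x : Fin N → X => ∀ t : X,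
                  |((Finset.univ.filter (fun j : Fin N => x j = t)).card : ℝ) / N
                    - μ₁ t| ≤ δ),
              ∏ j : Fin N, μ₀ (x j)))
        atTop < 0 := by
  obtain ⟨t₀, ht₀⟩ := Function.ne_iff.1 hne
  set c := μ₁ t₀ - μ₀ t₀
  have hc : 0 < |c| := abs_pos.2 (sub_ne_zero.2 ht₀)
  set δ := |c| / 2
  refine ⟨δ, half_pos hc, ?_⟩
  set f : X → ℝ := Pi.single t₀ c
  set a := c * μ₁ t₀ - |c| * δ
  have hmean : ∑ t, μ₀ t * f t < a := by
    have hc2 : |c| * |c| = c * c := abs_mul_abs_self c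
    simp only [f, Pi.single_apply, mul_ite, mul_zero, Fintype.sum_ite_eq', a, δ]
    nlinarith
  obtain ⟨l, hl, hr1⟩ := exists_mgf_lt_one hμ₀1 hmean
  set r := ∑ t, μ₀ t * exp (l * (f t - a))
  have hr0 : 0 < r := sum_pos (fun t _ => mul_pos (hμ₀ t) (exp_pos _)) univ_nonempty
  obtain ⟨tm, -, htm⟩ := exists_min_image univ μ₀ univ_nonempty
  refine (limsup_inv_mul_log_le_log (hμ₀ tm) ?_ ?_).trans_lt (log_neg hr0 hr1)
  · have hlarge : ∀ᶠ N : ℕ in atTop, (Fintype.card X : ℝ) ≤ δ * N :=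
      (tendsto_natCast_atTop_atTop.const_mul_atTop (half_pos hc)).eventually_ge_atTop _
    filter_upwards [hlarge, eventually_gt_atTop 0] with N hδN hN
    exact pow_le_sum_prod (hμ₀ tm).le (fun t => htm t (mem_univ t))
      (typeBall_nonempty hμ₁0 hμ₁1 hN hδN)
  · refine Eventually.of_forall fun N => le_trans ?_
      (sum_filter_prod_le_mgf_pow (fun t => (hμ₀ t).le) f a hl.le N)
    refine sum_le_sum_of_subset_of_nonneg (fun x hx => ?_) fun x _ _ =>
      prod_nonneg fun j _ => (hμ₀ _).le
    exact mem_filter.2 ⟨mem_univ x, le_sum_single_of_mem_typeBall hx t₀ c⟩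
end
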